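/- Let φ be a 3-CNF formula over m Boolean variables in which every clause uses three distinct variables, and let S(φ) be the associated system of inequalities over 0/1-valued variables x_1,…,x_m, x_1',…,x_m', α₀, α₁, α₁', α₂, α₂', α₃, α₃'. Then φ is satisfiable if and only if S(φ) has a 0/1 solution. -/

import Mathlib

open Finset

/-- A 3-CNF clause over `m` Boolean variables using three distinct variables
`i, j, t`, where the first `neg` of the three literals are negated
(negated variables are listed first). -/
structure Clause3 (m : ℕ) where
  i : Fin m
  j : Fin m
  t : Fin m
  /-- the number of negated literals; the negated variables come first -/
  neg : Fin 4
  hij : i ≠ j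
  hit : i ≠ t
  hjt : j ≠ t

/-- Satisfaction of a clause by a 0/1 assignment `σ`: the sum of the
(possibly negated) literal values is at least 1. -/
def clauseSat {m : ℕ} (σ : Fin m → ℕ) (c : Clause3 m) : Prop :=
  if c.neg = 0 then 1 ≤ σ c.i + σ c.j + σ c.t
  else if c.neg = 1 then 1 ≤ (1 - σ c.i) + σ c.j + σ c.t
  else if c.neg = 2 then 1 ≤ (1 - σ c.i) + (1 - σ c.j) + σ c.t
  else 1 ≤ (1 - σ c.i) + (1 - σ c.j) + (1 - σ c.t)

/-- The characteristic inequality of the agent corresponding to a clause.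
The seven `α`-variables `α₀, α₁, α₁', α₂, α₂', α₃, α₃'` are `α 0, …, α 6`. -/
def clauseIneq {m : ℕ} (x x' : Fin m → ℕ) (α : Fin 7 → ℕ) (c : Clause3 m) : Prop :=
  if c.neg = 0 then
    1 + α 0 ≤ (x c.i + x c.j + x c.t) + (x' c.i + x' c.j + x' c.t)
  else if c.neg = 1 then
    1 + α 0 + x c.i + x' c.i ≤ (α 1 + α 2) + (x c.j + x c.t) + (x' c.j + x' c.t)
  else if c.neg = 2 then
    1 + α 0 + (x c.i + x c.j) + (x' c.i + x' c.j) ≤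
      (α 1 + α 2) + (α 3 + α 4) + x c.t + x' c.t
  else
    1 + α 0 + (x c.i + x c.j + x c.t) + (x' c.i + x' c.j + x' c.t) ≤
      (α 1 + α 2) + (α 3 + α 4) + (α 5 + α 6)

/-- The 14 group-(G1) inequalities, where for each `α`-variable `a` the fixed
3-element subset `B a ⊆ A \ {a}` has been chosen. -/
def G1ineq {m : ℕ} (x x' : Fin m → ℕ) (α : Fin 7 → ℕ)
    (B : Fin 7 → Finset (Fin 7)) : Prop :=
  ∀ a : Fin 7,
    ((∑ i, x i) + (∑ b ∈ B a, α b) + 1 ≤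
        α a + (∑ i, x' i) + ∑ b ∈ Finset.univ \ (B a ∪ {a}), α b) ∧
    ((∑ i, x' i) + (∑ b ∈ Finset.univ \ (B a ∪ {a}), α b) + 1 ≤
        α a + (∑ i, x i) + ∑ b ∈ B a, α b)

/-- The 4m group-(G2) inequalities. -/
def G2ineq {m : ℕ} (x x' : Fin m → ℕ) (α : Fin 7 → ℕ) : Prop :=
  ∀ i : Fin m,
    (x i + (∑ j ∈ Finset.univ.erase i, x j) + 1 ≤
        α 0 + x' i + ∑ j ∈ Finset.univ.erase i, x' j) ∧
    (x i + (∑ j ∈ Finset.univ.erase i, x' j) + 1 ≤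
        α 0 + x' i + ∑ j ∈ Finset.univ.erase i, x j) ∧
    (x' i + (∑ j ∈ Finset.univ.erase i, x j) + 1 ≤
        α 0 + x i + ∑ j ∈ Finset.univ.erase i, x' j) ∧
    (x' i + (∑ j ∈ Finset.univ.erase i, x' j) + 1 ≤
        α 0 + x i + ∑ j ∈ Finset.univ.erase i, x j)

/-!
Adding the two (G1) inequalities of `a` gives `1 ≤ α a`, so all `α`-variables equal `1`.
With `α₀ = 1`, two of the (G2) inequalities of `i` force `∑ x = ∑ x'` and the other two
`x i + ∑_{j≠i} x' j = x' i + ∑_{j≠i} x j`; together `x i = x' i`. With `α = 1` and `x = x'`,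
each clause inequality is the clause, read on `σ = x`, doubled. Conversely `x = x' = σ`, `α = 1`
solves `S(φ)`; (G1) holds because `B a` and its complement in `A ∖ {a}` both have three elements.
-/

lemma card_univ_sdiff_union_singleton {ι : Type*} [Fintype ι] [DecidableEq ι] {B : Finset ι}
    {a : ι} (hB : B ⊆ univ \ {a}) :
    #(univ \ (B ∪ {a})) + #B + 1 = Fintype.card ι := by
  have ha : a ∉ B := fun h => by simpa using hB h
  have := card_sdiff_add_card_eq_card (subset_univ (B ∪ {a}))
  rwa [card_union_of_disjoint (disjoint_singleton_right.2 ha), card_singleton, card_univ,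
    ← add_assoc] at this

section

variable {m : ℕ} {x x' : Fin m → ℕ} {α : Fin 7 → ℕ} {B : Fin 7 → Finset (Fin 7)}

lemma G1ineq.one_le (h : G1ineq x x' α B) (a : Fin 7) : 1 ≤ α a := by
  have := h a
  omega

lemma G1ineq_one_of_sum_eq (hB : ∀ a, B a ⊆ univ \ {a} ∧ #(B a) = 3)
    (hsum : ∑ i, x i = ∑ i, x' i) : G1ineq x x' (fun _ => 1) B := by
  intro a
  have hcard := card_univ_sdiff_union_singleton (hB a).1
  simp only [sum_const, smul_eq_mul, mul_one, Fintype.card_fin, (hB a).2] at hcard ⊢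
  omega

lemma G2ineq.eq (h : G2ineq x x' α) (h₀ : α 0 ≤ 1) : x = x' := by
  funext i
  obtain ⟨h₁, h₂, h₃, h₄⟩ := h i
  have e := sum_erase_add univ x (mem_univ i)
  have e' := sum_erase_add univ x' (mem_univ i)
  omega

lemma G2ineq_self (h₀ : 1 ≤ α 0) : G2ineq x x α := fun _ => by omega

end

lemma clauseIneq_self_one_iff {m : ℕ} {σ : Fin m → ℕ} (hσ : ∀ i, σ i ≤ 1) (c : Clause3 m) :
    clauseIneq σ σ (fun _ => 1) c ↔ clauseSat σ c := by
  have := hσ c.i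
  have := hσ c.j
  have := hσ c.t
  unfold clauseIneq clauseSat
  split_ifs <;> simp only at * <;> omega

/-- `φ` is satisfiable iff the system `S(φ)` has a 0/1 solution. -/
theorem formula_satisfiable_iff_system_solvable (m : ℕ) (φ : List (Clause3 m))
    (B : Fin 7 → Finset (Fin 7))
    (hB : ∀ a, B a ⊆ Finset.univ \ {a} ∧ (B a).card = 3) :
    (∃ σ : Fin m → ℕ, (∀ i, σ i ≤ 1) ∧ ∀ c ∈ φ, clauseSat σ c) ↔
    (∃ (x x' : Fin m → ℕ) (α : Fin 7 → ℕ),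
      (∀ i, x i ≤ 1) ∧ (∀ i, x' i ≤ 1) ∧ (∀ a, α a ≤ 1) ∧
      G1ineq x x' α B ∧ G2ineq x x' α ∧ ∀ c ∈ φ, clauseIneq x x' α c) := by
  constructor
  · rintro ⟨σ, hσ, hsat⟩
    exact ⟨σ, σ, fun _ => 1, hσ, hσ, fun _ => le_rfl, G1ineq_one_of_sum_eq hB rfl,
      G2ineq_self (le_refl 1), fun c hc => (clauseIneq_self_one_iff hσ c).2 (hsat c hc)⟩
  · rintro ⟨x, x', α, hx, -, hα, hG1, hG2, hC⟩
    obtain rfl : α = fun _ => 1 := funext fun a => le_antisymm (hα a) (hG1.one_le a)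
    obtain rfl : x = x' := hG2.eq le_rfl
    exact ⟨x, hx, fun c hc => (clauseIneq_self_one_iff hx c).1 (hC c hc)⟩
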